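/- For every ν ∈ (0,1] and every k = (k₁,k₂,k₃) ∈ ℤ³ with k₃ ≠ 0, one has |M̂₁^ν(k)| ≤ 3|k|, i.e. |k₂k₃|k|² − k₁k₃(k₂² + ν|k|⁴)| ≤ 3|k| · (|k|²k₃² + (k₂² + ν|k|⁴)²). -/

import Mathlib

/-- Euclidean norm of a lattice point `k = (k₁, k₂, k₃) ∈ ℤ³`. -/
noncomputable def knorm (k : ℤ × ℤ × ℤ) : ℝ :=
  Real.sqrt (((k.1 : ℝ)) ^ 2 + ((k.2.1 : ℝ)) ^ 2 + ((k.2.2 : ℝ)) ^ 2)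

/-- Denominator `D_ν(k) = |k|²k₃² + (k₂² + ν|k|⁴)²`. -/
noncomputable def Dnu (ν : ℝ) (k : ℤ × ℤ × ℤ) : ℝ :=
  (knorm k) ^ 2 * ((k.2.2 : ℝ)) ^ 2 + (((k.2.1 : ℝ)) ^ 2 + ν * (knorm k) ^ 4) ^ 2

/-- First component of the magnetogeostrophic symbol. -/
noncomputable def Mhat1 (ν : ℝ) (k : ℤ × ℤ × ℤ) : ℝ :=
  ((k.2.1 : ℝ) * (k.2.2 : ℝ) * (knorm k) ^ 2
    - (k.1 : ℝ) * (k.2.2 : ℝ) * (((k.2.1 : ℝ)) ^ 2 + ν * (knorm k) ^ 4)) / Dnu ν k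

/-- Second component of the magnetogeostrophic symbol. -/
noncomputable def Mhat2 (ν : ℝ) (k : ℤ × ℤ × ℤ) : ℝ :=
  (-(k.1 : ℝ) * (k.2.2 : ℝ) * (knorm k) ^ 2
    - (k.2.1 : ℝ) * (k.2.2 : ℝ) * (((k.2.1 : ℝ)) ^ 2 + ν * (knorm k) ^ 4)) / Dnu ν k

/-- Third component of the magnetogeostrophic symbol. -/
noncomputable def Mhat3 (ν : ℝ) (k : ℤ × ℤ × ℤ) : ℝ :=
  (((k.1 : ℝ) ^ 2 + (k.2.1 : ℝ) ^ 2) * (((k.2.1 : ℝ)) ^ 2 + ν * (knorm k) ^ 4)) / Dnu ν k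

/-! With `(x, y, z) = k`, `r = |k|` and `a = k₂² + ν|k|⁴ ≥ 0` the numerator is `y z r² - x z a`.
Bound its two terms separately: `|y| |z| r² ≤ r · r² z²` because `|z| ≤ z²` for
`|z| ≥ 1`, while `|x| |z| a ≤ r |z| a ≤ (r² z² + a²) / 2` by AM–GM. Both pieces are at most
`r (r² z² + a²)` once `r ≥ 1`, and for a lattice point with `k₃ ≠ 0` we have `|k| ≥ |k₃| ≥ 1`. -/

theorem abs_mul_sq_sub_mul_le {x y z r a : ℝ} (hx : |x| ≤ r) (hy : |y| ≤ r) (hz : 1 ≤ |z|)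
    (hzr : |z| ≤ r) (ha : 0 ≤ a) :
    |y * z * r ^ 2 - x * z * a| ≤ 3 * r * (r ^ 2 * z ^ 2 + a ^ 2) := by
  have hr : 1 ≤ r := hz.trans hzr
  have hz_sq : |z| ≤ z ^ 2 := by nlinarith [sq_abs z]
  have amgm : r * |z| * a ≤ (r ^ 2 * z ^ 2 + a ^ 2) / 2 := by
    nlinarith [sq_nonneg (r * |z| - a), sq_abs z]
  calc |y * z * r ^ 2 - x * z * a|
      ≤ |y| * |z| * r ^ 2 + |x| * |z| * a := by
        refine (abs_sub _ _).trans_eq ?_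
        rw [abs_mul, abs_mul, abs_mul, abs_mul, abs_of_nonneg (sq_nonneg r), abs_of_nonneg ha]
    _ ≤ r * z ^ 2 * r ^ 2 + r * |z| * a := by gcongr
    _ ≤ 3 * r * (r ^ 2 * z ^ 2 + a ^ 2) := by nlinarith [sq_nonneg (r * z), sq_nonneg a]

theorem abs_fst_le_knorm (k : ℤ × ℤ × ℤ) : |(k.1 : ℝ)| ≤ knorm k :=
  Real.abs_le_sqrt (by nlinarith)

theorem abs_snd_fst_le_knorm (k : ℤ × ℤ × ℤ) : |(k.2.1 : ℝ)| ≤ knorm k :=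
  Real.abs_le_sqrt (by nlinarith)

theorem abs_snd_snd_le_knorm (k : ℤ × ℤ × ℤ) : |(k.2.2 : ℝ)| ≤ knorm k :=
  Real.abs_le_sqrt (by nlinarith)

theorem one_le_abs_snd_snd {k : ℤ × ℤ × ℤ} (hk3 : k.2.2 ≠ 0) : 1 ≤ |(k.2.2 : ℝ)| := by
  exact_mod_cast Int.one_le_abs hk3

theorem Dnu_pos (ν : ℝ) {k : ℤ × ℤ × ℤ} (hk3 : k.2.2 ≠ 0) : 0 < Dnu ν k := by
  have hz : 1 ≤ |(k.2.2 : ℝ)| := one_le_abs_snd_snd hk3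
  have hr : 0 < knorm k := by linarith [abs_snd_snd_le_knorm k]
  have hz0 : 0 < (k.2.2 : ℝ) ^ 2 := by nlinarith [sq_abs (k.2.2 : ℝ)]
  unfold Dnu
  positivity

theorem stmt2 (ν : ℝ) (hν : ν ∈ Set.Ioc (0 : ℝ) 1) (k : ℤ × ℤ × ℤ)
    (hk3 : k.2.2 ≠ 0) :
    |Mhat1 ν k| ≤ 3 * knorm k ∧
      |(k.2.1 : ℝ) * (k.2.2 : ℝ) * (knorm k) ^ 2
          - (k.1 : ℝ) * (k.2.2 : ℝ) * (((k.2.1 : ℝ)) ^ 2 + ν * (knorm k) ^ 4)|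
        ≤ 3 * knorm k *
          ((knorm k) ^ 2 * ((k.2.2 : ℝ)) ^ 2
            + (((k.2.1 : ℝ)) ^ 2 + ν * (knorm k) ^ 4) ^ 2) := by
  have hν0 : 0 ≤ ν := hν.1.le
  have numerator_le := abs_mul_sq_sub_mul_le (abs_fst_le_knorm k) (abs_snd_fst_le_knorm k)
    (one_le_abs_snd_snd hk3) (abs_snd_snd_le_knorm k)
    (by positivity : 0 ≤ (k.2.1 : ℝ) ^ 2 + ν * knorm k ^ 4)
  refine ⟨?_, numerator_le⟩
  have hD := Dnu_pos ν hk3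
  rw [Mhat1, abs_div, abs_of_pos hD, div_le_iff₀ hD]
  exact numerator_le
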